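/- Let G be a connected graph and uv an edge of G such that u and v have no common neighbor. Then for every integer s ≥ 3, the number of s-cliques of the contraction G/uv is at least the number of s-cliques of G, i.e., N_s(G/uv) ≥ N_s(G). -/

import Mathlib

/-!
Send every `s`-clique of `G` to its image under the contraction map `V → V ∖ {v}`, `v ↦ u`.
Since `u` and `v` have no common neighbour while an `s`-clique with `s ≥ 3` has a vertex outside
`{u, v}`, no clique contains both `u` and `v`, so the image is again an `s`-clique. The same third
vertex shows that two cliques, one through `u` and one through `v`, never have the same image,
which makes the map injective.
-/

/-- The simple graph obtained from `G` by contracting the edge `uv`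
(identifying `v` with `u` and deleting `v`). -/
def contractGraph {V : Type*} (G : SimpleGraph V) (u v : V) :
    SimpleGraph {w : V // w ≠ v} :=
  SimpleGraph.fromRel fun a b =>
    G.Adj a.val b.val ∨ (a.val = u ∧ G.Adj v b.val) ∨ (b.val = u ∧ G.Adj v a.val)

theorem Finset.exists_mem_ne_ne {α : Type*} [DecidableEq α] {t : Finset α} (ht : 3 ≤ t.card)
    (a b : α) : ∃ w ∈ t, w ≠ a ∧ w ≠ b := by
  have hsub : ¬ t ⊆ {a, b} := fun h => by
    have := (Finset.card_le_card h).trans Finset.card_le_two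
    omega
  obtain ⟨w, hw, hwab⟩ := Finset.not_subset.mp hsub
  simp only [Finset.mem_insert, Finset.mem_singleton, not_or] at hwab
  exact ⟨w, hw, hwab⟩

namespace SimpleGraph

variable {V : Type*} [DecidableEq V] {G : SimpleGraph V} {u v : V}

def contractMap (huv : u ≠ v) (w : V) : {w : V // w ≠ v} :=
  if h : w = v then ⟨u, huv⟩ else ⟨w, h⟩

@[simp]
theorem contractMap_self (huv : u ≠ v) : contractMap huv v = ⟨u, huv⟩ := dif_pos rfl

theorem contractMap_of_ne (huv : u ≠ v) {w : V} (hw : w ≠ v) : contractMap huv w = ⟨w, hw⟩ :=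
  dif_neg hw

theorem contractMap_eq_contractMap_iff (huv : u ≠ v) {a b : V} :
    contractMap huv a = contractMap huv b ↔ a = b ∨ (a = u ∧ b = v) ∨ (a = v ∧ b = u) := by
  by_cases ha : a = v <;> by_cases hb : b = v
  · simp [ha, hb]
  · subst ha
    rw [contractMap_self, contractMap_of_ne huv hb, Subtype.mk.injEq]
    grind
  · subst hb
    rw [contractMap_self, contractMap_of_ne huv ha, Subtype.mk.injEq]
    grind
  · rw [contractMap_of_ne huv ha, contractMap_of_ne huv hb, Subtype.mk.injEq]
    grind

theorem Adj.contractGraph_adj_contractMap (huv : u ≠ v) {a b : V} (hab : G.Adj a b)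
    (hne : contractMap huv a ≠ contractMap huv b) :
    (contractGraph G u v).Adj (contractMap huv a) (contractMap huv b) := by
  refine (fromRel_adj _ _ _).mpr ⟨hne, Or.inl ?_⟩
  by_cases ha : a = v <;> by_cases hb : b = v
  · exact absurd (ha.trans hb.symm) hab.ne
  · subst ha
    rw [contractMap_self, contractMap_of_ne huv hb]
    exact Or.inr (Or.inl ⟨rfl, hab⟩)
  · subst hb
    rw [contractMap_self, contractMap_of_ne huv ha]
    exact Or.inr (Or.inr ⟨rfl, hab.symm⟩)
  · rw [contractMap_of_ne huv ha, contractMap_of_ne huv hb]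
    exact Or.inl hab

theorem injOn_contractMap (huv : u ≠ v) {t : Set V} (h : ¬ (u ∈ t ∧ v ∈ t)) :
    Set.InjOn (contractMap huv) t := by
  intro a ha b hb hab
  rcases (contractMap_eq_contractMap_iff huv).mp hab with rfl | ⟨rfl, rfl⟩ | ⟨rfl, rfl⟩
  · rfl
  · exact absurd ⟨ha, hb⟩ h
  · exact absurd ⟨hb, ha⟩ h

variable {s : ℕ} {t t₁ t₂ : Finset V}

theorem IsNClique.image_contractMap (huv : u ≠ v) (ht : G.IsNClique s t)
    (h : ¬ (u ∈ t ∧ v ∈ t)) : (contractGraph G u v).IsNClique s (t.image (contractMap huv)) := by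
  have hinj : Set.InjOn (contractMap huv) t := injOn_contractMap huv h
  refine ⟨?_, by rw [Finset.card_image_of_injOn hinj, ht.card_eq]⟩
  rw [Finset.coe_image]
  rintro _ ⟨a, ha, rfl⟩ _ ⟨b, hb, rfl⟩ hne
  exact (ht.1 ha hb fun hab => hne (congrArg _ hab)).contractGraph_adj_contractMap huv hne

theorem IsNClique.not_mem_and_mem (hcn : ∀ w : V, ¬ (G.Adj u w ∧ G.Adj v w)) (hs : 3 ≤ s)
    (ht : G.IsNClique s t) : ¬ (u ∈ t ∧ v ∈ t) := by
  rintro ⟨hu, hv⟩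
  obtain ⟨w, hw, hwu, hwv⟩ := Finset.exists_mem_ne_ne (ht.card_eq ▸ hs) u v
  exact hcn w ⟨ht.1 hu hw hwu.symm, ht.1 hv hw hwv.symm⟩

theorem IsNClique.image_contractMap_ne (hcn : ∀ w : V, ¬ (G.Adj u w ∧ G.Adj v w)) (hs : 3 ≤ s)
    (huv : u ≠ v) (ht₁ : G.IsNClique s t₁) (ht₂ : G.IsNClique s t₂) (hu : u ∈ t₁) (hv : v ∈ t₂) :
    t₁.image (contractMap huv) ≠ t₂.image (contractMap huv) := by
  intro himage
  obtain ⟨w, hw, hwu, hwv⟩ := Finset.exists_mem_ne_ne (ht₂.card_eq ▸ hs) u v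
  -- `w` is the only preimage of itself, so it lies in `t₁` too and is a common neighbour.
  obtain ⟨c, hc, hcw⟩ := Finset.mem_image.mp (himage ▸ Finset.mem_image_of_mem _ hw)
  obtain rfl : c = w := by
    rcases (contractMap_eq_contractMap_iff huv).mp hcw with h | ⟨-, rfl⟩ | ⟨-, rfl⟩
    exacts [h, absurd rfl hwv, absurd rfl hwu]
  exact hcn c ⟨ht₁.1 hu hc hwu.symm, ht₂.1 hv hw hwv.symm⟩

theorem IsNClique.subset_of_image_contractMap_eq
    (hcn : ∀ w : V, ¬ (G.Adj u w ∧ G.Adj v w)) (hs : 3 ≤ s) (huv : u ≠ v)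
    (ht₁ : G.IsNClique s t₁) (ht₂ : G.IsNClique s t₂)
    (himage : t₁.image (contractMap huv) = t₂.image (contractMap huv)) :
    t₁ ⊆ t₂ := by
  intro a ha
  obtain ⟨b, hb, hba⟩ := Finset.mem_image.mp (himage ▸ Finset.mem_image_of_mem _ ha)
  rcases (contractMap_eq_contractMap_iff huv).mp hba with rfl | ⟨rfl, rfl⟩ | ⟨rfl, rfl⟩
  · exact hb
  · exact absurd himage.symm (image_contractMap_ne hcn hs huv ht₂ ht₁ hb ha)
  · exact absurd himage (image_contractMap_ne hcn hs huv ht₁ ht₂ ha hb)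

end SimpleGraph

open SimpleGraph in
theorem stmt_9_general {V : Type*} [Fintype V] (G : SimpleGraph V) (u v : V) (s : ℕ)
    (huv : G.Adj u v)
    (hcn : ∀ w : V, ¬ (G.Adj u w ∧ G.Adj v w)) (hs : 3 ≤ s) :
    (G.cliqueSet s).ncard ≤ ((contractGraph G u v).cliqueSet s).ncard := by
  classical
  refine Set.ncard_le_ncard_of_injOn (·.image (contractMap huv.ne)) (fun t ht => ?_) ?_
  · exact ht.image_contractMap huv.ne (ht.not_mem_and_mem hcn hs)
  · intro t₁ ht₁ t₂ ht₂ himage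
    exact (ht₁.subset_of_image_contractMap_eq hcn hs huv.ne ht₂ himage).antisymm
      (ht₂.subset_of_image_contractMap_eq hcn hs huv.ne ht₁ himage.symm)

theorem stmt_9 {V : Type*} [Fintype V] (G : SimpleGraph V) (u v : V) (s : ℕ)
    (hconn : G.Connected) (huv : G.Adj u v)
    (hcn : ∀ w : V, ¬ (G.Adj u w ∧ G.Adj v w)) (hs : 3 ≤ s) :
    (G.cliqueSet s).ncard ≤ ((contractGraph G u v).cliqueSet s).ncard :=
  stmt_9_general G u v s huv hcn hs
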